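/- Let D ≡ 1 (mod 4) be square-free, let n > 0 with either n odd or (D−ν²)/n odd where ν² ≡ D (mod n), and let m₀ be coprime to n with μ₀² ≡ D (mod m₀). Then the product of ideals (m₀, μ₀ + √D)·(n, ν + √D) in ℤ[√D] equals (m₀n, μ + √D), where μ is the unique residue mod m₀n with μ ≡ ν (mod n) and μ ≡ μ₀ (mod m₀). -/

import Mathlib

/-- For `D` squarefree with `D ≡ 1 (mod 4)`, `n > 0` with `ν² ≡ D (mod n)`
and (`n` odd or `(D−ν²)/n` odd), and `m₀` coprime to `n` with `μ₀² ≡ D (mod m₀)`: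
in `ℤ[√D]` one has `(m₀, μ₀ + √D)·(n, ν + √D) = (m₀n, μ + √D)` where `μ` is the CRT residue
with `μ ≡ μ₀ (mod m₀)` and `μ ≡ ν (mod n)`. -/
theorem stmt_14 (D : ℤ) (hsf : Squarefree D) (hD4 : D % 4 = 1)
    (ν n : ℤ) (hn : 0 < n) (hνroot : n ∣ D - ν ^ 2)
    (hodd : Odd n ∨ Odd ((D - ν ^ 2) / n))
    (μ₀ m₀ : ℤ) (hcop : IsCoprime m₀ n) (hμ₀root : m₀ ∣ D - μ₀ ^ 2)
    (μ : ℤ) (hμ₀ : m₀ ∣ μ - μ₀) (hν : n ∣ μ - ν) :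
    Ideal.span {(m₀ : Zsqrtd D), (μ₀ : Zsqrtd D) + Zsqrtd.sqrtd} *
        Ideal.span {(n : Zsqrtd D), (ν : Zsqrtd D) + Zsqrtd.sqrtd} =
      Ideal.span {((m₀ * n : ℤ) : Zsqrtd D), (μ : Zsqrtd D) + Zsqrtd.sqrtd} := by
  -- divisibility facts over ℤ
  have hm0 : m₀ ∣ D - μ ^ 2 := by
    obtain ⟨c, hc⟩ := hμ₀root
    obtain ⟨l, hl⟩ := hμ₀
    exact ⟨c - l * (μ + μ₀), by linear_combination hc - (μ + μ₀) * hl⟩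
  have hnn : n ∣ D - μ ^ 2 := by
    obtain ⟨c, hc⟩ := hνroot
    obtain ⟨k, hk⟩ := hν
    exact ⟨c - k * (μ + ν), by linear_combination hc - (μ + ν) * hk⟩
  obtain ⟨e, he⟩ := hcop.mul_dvd hm0 hnn
  obtain ⟨k, hk⟩ := hν
  obtain ⟨l, hl⟩ := hμ₀
  obtain ⟨a, b, hab⟩ := hcop
  -- cast the facts to ℤ√D
  set R := Zsqrtd D
  set s : R := Zsqrtd.sqrtd with hs
  have hss : s * s = (D : R) := Zsqrtd.dmuld
  have hkR : (μ : R) - ν = n * k := by rw [← Int.cast_sub, hk, Int.cast_mul]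
  have hlR : (μ : R) - μ₀ = m₀ * l := by rw [← Int.cast_sub, hl, Int.cast_mul]
  have habR : (a : R) * m₀ + b * n = 1 := by rw [← Int.cast_mul, ← Int.cast_mul, ← Int.cast_add, hab, Int.cast_one]
  have heR : (D : R) - μ ^ 2 = m₀ * n * e := by rw [← Int.cast_pow, ← Int.cast_sub, he, Int.cast_mul, Int.cast_mul]
  rw [Ideal.span_pair_mul_span_pair]
  apply le_antisymm
  · rw [Ideal.span_le]
    rintro x (rfl | rfl | rfl | rfl)
    · rw [SetLike.mem_coe, Ideal.mem_span_pair]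
      exact ⟨1, 0, by push_cast; ring⟩
    · rw [SetLike.mem_coe, Ideal.mem_span_pair]
      refine ⟨(-k : ℤ), (m₀ : R), ?_⟩
      push_cast
      linear_combination (m₀ : R) * hkR
    · rw [SetLike.mem_coe, Ideal.mem_span_pair]
      refine ⟨(-l : ℤ), (n : R), ?_⟩
      push_cast
      linear_combination (n : R) * hlR
    · rw [SetLike.mem_coe, Ideal.mem_span_pair]
      refine ⟨(e : R) + l * k, (2 * μ : R) - m₀ * l - n * k, ?_⟩
      push_cast
      linear_combination -heR + ((μ : R) + s - n * k) * hlR + ((μ₀ : R) + s) * hkR - hss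
  · rw [Ideal.span_le]
    have mem1 : (m₀ : R) * n ∈ Ideal.span {(m₀ : R) * n, (m₀ : R) * ((ν : R) + s),
        ((μ₀ : R) + s) * n, ((μ₀ : R) + s) * ((ν : R) + s)} :=
      Ideal.subset_span (by simp)
    have mem2 : (m₀ : R) * ((ν : R) + s) ∈ Ideal.span {(m₀ : R) * n, (m₀ : R) * ((ν : R) + s),
        ((μ₀ : R) + s) * n, ((μ₀ : R) + s) * ((ν : R) + s)} :=
      Ideal.subset_span (by simp)
    have mem3 : ((μ₀ : R) + s) * n ∈ Ideal.span {(m₀ : R) * n, (m₀ : R) * ((ν : R) + s),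
        ((μ₀ : R) + s) * n, ((μ₀ : R) + s) * ((ν : R) + s)} :=
      Ideal.subset_span (by simp)
    rintro x (rfl | rfl)
    · rw [SetLike.mem_coe]
      have : ((m₀ * n : ℤ) : R) = (m₀ : R) * n := by rw [Int.cast_mul]
      rw [this]; exact mem1
    · rw [SetLike.mem_coe]
      have key : (μ : R) + s = ((a : R) * k + (b : R) * l) * ((m₀ : R) * n)
          + (a : R) * ((m₀ : R) * ((ν : R) + s)) + (b : R) * (((μ₀ : R) + s) * n) := by
        linear_combination (-((μ : R) + s)) * habR + ((a : R) * m₀) * hkR + ((b : R) * n) * hlR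
      rw [key]
      exact add_mem (add_mem (Ideal.mul_mem_left _ _ mem1) (Ideal.mul_mem_left _ _ mem2))
        (Ideal.mul_mem_left _ _ mem3)
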